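/- Let p ∈ M₂(C(S²)) be the Bott projection on the 2-sphere. Then 1_{C(S²)} ≾ p ⊕ p in M₄(C(S²)); that is, the trivial rank-one projection is Murray–von Neumann subequivalent to the direct sum of two copies of the Bott projection. -/

import Mathlib

/-!
Stack the two columns of `p` into a vector `s ∈ ℂ⁴`. Since `p` is idempotent, each column lies
in the range of `p`, so `(p ⊕ p) s = s`; since `p` is a self-adjoint idempotent of trace one,
`‖s‖² = ∑ |pᵢⱼ|² = tr (p* p) = tr p = 1`. The rank-one operator `V = s e₀*` is then a continuous
partial isometry with `V* V = e₀ e₀*` and `V V* = s s* ≤ p ⊕ p`.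
-/

/-- The Bott projection on the 2-sphere `S² ⊆ ℝ³`, as a `2 × 2` matrix of functions:
`p(x,y,z) = ½ [[1+z, x-iy], [x+iy, 1-z]]`. -/
noncomputable def bottProjection (v : Metric.sphere (0 : EuclideanSpace ℝ (Fin 3)) 1) :
    Matrix (Fin 2) (Fin 2) ℂ :=
  (2⁻¹ : ℂ) •
    !![1 + ((v : EuclideanSpace ℝ (Fin 3)) 2 : ℂ),
        ((v : EuclideanSpace ℝ (Fin 3)) 0 : ℂ) - Complex.I * ((v : EuclideanSpace ℝ (Fin 3)) 1 : ℂ);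
      ((v : EuclideanSpace ℝ (Fin 3)) 0 : ℂ) + Complex.I * ((v : EuclideanSpace ℝ (Fin 3)) 1 : ℂ),
        1 - ((v : EuclideanSpace ℝ (Fin 3)) 2 : ℂ)]

open Matrix

section RankOnePartialIsometry

variable {α n : Type*} [Semiring α] [StarRing α] [Fintype n] [DecidableEq n]

theorem star_vecMulVec_single_mul_self {s : n → α} (hs : star s ⬝ᵥ s = 1) (i : n) :
    star (vecMulVec s (Pi.single i 1)) * vecMulVec s (Pi.single i 1) =
      diagonal (Pi.single i 1) := by
  rw [star_eq_conjTranspose, conjTranspose_vecMulVec, vecMulVec_mul_vecMulVec, hs, one_smul,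
    diagonal_single, single_eq_single_vecMulVec_single, Pi.star_single, star_one]

theorem vecMulVec_single_mul_star (s : n → α) (i : n) :
    vecMulVec s (Pi.single i 1) * star (vecMulVec s (Pi.single i 1)) = vecMulVec s (star s) := by
  rw [star_eq_conjTranspose, conjTranspose_vecMulVec, vecMulVec_mul_vecMulVec, Pi.star_single,
    star_one, single_dotProduct, Pi.single_eq_same, one_mul, one_smul]

end RankOnePartialIsometry

section BlockDiagonal

variable {α l k : Type*} [Semiring α] [Fintype l] [Fintype k]

theorem reindex_fromBlocks_diag_mulVec_sumElim (e : l ⊕ l ≃ k) (p : Matrix l l α) (u v : l → α) :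
    reindex e e (fromBlocks p 0 0 p) *ᵥ (Sum.elim u v ∘ e.symm) =
      Sum.elim (p *ᵥ u) (p *ᵥ v) ∘ e.symm := by
  rw [reindex_apply, submatrix_mulVec_equiv, Equiv.symm_symm, Function.comp_assoc,
    Equiv.symm_comp_self, Function.comp_id, fromBlocks_mulVec]
  simp [Function.comp_def]

theorem star_sumElim_dotProduct_sumElim [StarRing α] (e : l ⊕ l ≃ k) (u v : l → α) :
    star (Sum.elim u v ∘ e.symm) ⬝ᵥ (Sum.elim u v ∘ e.symm) = star u ⬝ᵥ u + star v ⬝ᵥ v := by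
  change star (Sum.elim u v) ∘ e.symm ⬝ᵥ _ = _
  rw [dotProduct_comp_equiv_symm, Function.comp_assoc, Equiv.symm_comp_self, Function.comp_id,
    Function.star_sumElim, sumElim_dotProduct_sumElim]

theorem conjTranspose_mul_self_apply [StarRing α] (p : Matrix l l α) (j : l) :
    (pᴴ * p) j j = star (p.col j) ⬝ᵥ p.col j :=
  rfl

end BlockDiagonal

section StackedColumns

variable {α : Type*} {m : ℕ}

def stackCols (p : Matrix (Fin m) (Fin 2) α) : Fin (m + m) → α :=
  Sum.elim (p.col 0) (p.col 1) ∘ finSumFinEquiv.symm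

theorem continuous_stackCols [TopologicalSpace α] :
    Continuous (stackCols : Matrix (Fin m) (Fin 2) α → Fin (m + m) → α) := by
  refine continuous_pi fun i => ?_
  rcases h : finSumFinEquiv.symm i with j | j <;>
    simp only [stackCols, Function.comp_apply, h, Sum.elim_inl, Sum.elim_inr, col_apply] <;>
    fun_prop

theorem IsIdempotentElem.mulVec_col [Semiring α] {p : Matrix (Fin m) (Fin m) α}
    (hp : IsIdempotentElem p) (j : Fin m) : p *ᵥ p.col j = p.col j := by
  rw [← mulVec_single_one, mulVec_mulVec, hp.eq]

theorem reindex_fromBlocks_diag_mulVec_stackCols [Semiring α] {p : Matrix (Fin 2) (Fin 2) α}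
    (hp : IsIdempotentElem p) :
    reindex finSumFinEquiv finSumFinEquiv (fromBlocks p 0 0 p) *ᵥ stackCols p = stackCols p := by
  rw [stackCols, reindex_fromBlocks_diag_mulVec_sumElim, hp.mulVec_col, hp.mulVec_col]

theorem IsStarProjection.star_stackCols_dotProduct_stackCols [Semiring α] [StarRing α]
    {p : Matrix (Fin 2) (Fin 2) α} (hp : IsStarProjection p) :
    star (stackCols p) ⬝ᵥ stackCols p = trace p := by
  rw [stackCols, star_sumElim_dotProduct_sumElim, ← conjTranspose_mul_self_apply,
    ← conjTranspose_mul_self_apply, ← star_eq_conjTranspose, hp.isSelfAdjoint.star_eq,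
    hp.isIdempotentElem.eq, trace_fin_two]

end StackedColumns

theorem add_I_mul_mul_sub_I_mul_of_sq_add_sq_add_sq {x y z : ℝ} (h : x ^ 2 + y ^ 2 + z ^ 2 = 1) :
    ((x : ℂ) + Complex.I * y) * (x - Complex.I * y) = (1 + z) * (1 - z) := by
  have hℂ : (x : ℂ) ^ 2 + (y : ℂ) ^ 2 + (z : ℂ) ^ 2 = 1 := by exact_mod_cast h
  linear_combination hℂ - (y : ℂ) ^ 2 * Complex.I_sq

section BottProjection

variable (w : Metric.sphere (0 : EuclideanSpace ℝ (Fin 3)) 1)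

theorem sq_add_sq_add_sq_of_mem_sphere :
    (w : EuclideanSpace ℝ (Fin 3)) 0 ^ 2 + (w : EuclideanSpace ℝ (Fin 3)) 1 ^ 2
      + (w : EuclideanSpace ℝ (Fin 3)) 2 ^ 2 = 1 := by
  have h := EuclideanSpace.norm_sq_eq (w : EuclideanSpace ℝ (Fin 3))
  rw [norm_eq_of_mem_sphere, Fin.sum_univ_three] at h
  simpa only [Real.norm_eq_abs, sq_abs, one_pow, eq_comm] using h

theorem continuous_bottProjection : Continuous bottProjection := by
  unfold bottProjection
  fun_prop

theorem trace_bottProjection : trace (bottProjection w) = 1 := by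
  simp only [bottProjection, trace_fin_two, Matrix.smul_apply, of_apply, cons_val', cons_val_zero,
    cons_val_one, cons_val_fin_one, smul_eq_mul]
  ring

theorem isStarProjection_bottProjection : IsStarProjection (bottProjection w) := by
  have h := add_I_mul_mul_sub_I_mul_of_sq_add_sq_add_sq (sq_add_sq_add_sq_of_mem_sphere w)
  refine ⟨?_, ?_⟩
  · ext i j
    fin_cases i <;> fin_cases j <;>
      simp only [bottProjection, Fin.zero_eta, Fin.mk_one, mul_apply, Fin.sum_univ_two,
        Matrix.smul_apply, of_apply, cons_val', cons_val_zero, cons_val_one, cons_val_fin_one,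
        smul_eq_mul]
    all_goals first | linear_combination (1 / 4 : ℂ) * h | ring
  · ext i j
    fin_cases i <;> fin_cases j <;> simp [bottProjection, sub_eq_add_neg]

end BottProjection

/-- `1_{C(S²)} ≾ p ⊕ p` in `M₄(C(S²))`: the trivial rank-one projection is Murray–von
Neumann subequivalent to the direct sum of two copies of the Bott projection, i.e. there
is a continuous `4 × 4`-matrix-valued partial isometry `V` with `V*V = diag(1,0,0,0)`
and `VV* ≤ p ⊕ p`. -/
theorem stmt_13 :
    ∃ V : Metric.sphere (0 : EuclideanSpace ℝ (Fin 3)) 1 → Matrix (Fin 4) (Fin 4) ℂ,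
      Continuous V ∧
      (∀ w, star (V w) * V w = Matrix.diagonal ![1, 0, 0, 0]) ∧
      (∀ w, (Matrix.reindex finSumFinEquiv finSumFinEquiv
            (Matrix.fromBlocks (bottProjection w) 0 0 (bottProjection w)) : Matrix (Fin 4) (Fin 4) ℂ)
          * (V w * star (V w)) = V w * star (V w)) := by
  have hunit (w : Metric.sphere (0 : EuclideanSpace ℝ (Fin 3)) 1) :
      star (stackCols (bottProjection w)) ⬝ᵥ stackCols (bottProjection w) = 1 :=
    (isStarProjection_bottProjection w).star_stackCols_dotProduct_stackCols.trans
      (trace_bottProjection w)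
  have he₀ : ![(1 : ℂ), 0, 0, 0] = Pi.single 0 1 := by
    ext i; fin_cases i <;> rfl
  refine ⟨fun w => vecMulVec (stackCols (bottProjection w)) (Pi.single 0 1), ?_, fun w => ?_,
    fun w => ?_⟩
  · exact (continuous_stackCols.comp continuous_bottProjection).matrix_vecMulVec continuous_const
  · rw [he₀, star_vecMulVec_single_mul_self (hunit w)]
  · rw [vecMulVec_single_mul_star, mul_vecMulVec,
      reindex_fromBlocks_diag_mulVec_stackCols (isStarProjection_bottProjection w).isIdempotentElem]
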